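/- arXiv:2304.10487 — 5 statements merged into one kernel-verified Lean document; each statement's English description precedes it below -/
import Mathlib

section
/- Let β ∈ (0,1], λ > 0, t > 0 and u ∈ [0,1]. Then the probability generating function of the fractional Poisson process satisfies ∑_{n=0}^∞ u^n p_β(n|t,λ) = E_β(−λ t^β (1−u)), where E_β is the Mittag-Leffler function. -/
open Real

/-- pmf of the fractional Poisson process. -/
noncomputable def fracPoissonPMF (β lam t : ℝ) (n : ℕ) : ℝ :=
  (lam * t ^ β) ^ n / n.factorial *
    ∑' k : ℕ, ((n + k).factorial / k.factorial : ℝ) * (-(lam * t ^ β)) ^ k /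
      Real.Gamma (β * ((k : ℝ) + n) + 1)

/-- Mittag-Leffler function. -/
noncomputable def mittagLeffler (β z : ℝ) : ℝ :=
  ∑' k : ℕ, z ^ k / Real.Gamma (β * k + 1)

/-!
Expanding the inner series of `fracPoissonPMF` and using `(n + k)! / (n! k!) = C(n + k, n)`,
the generating function becomes a double series over `(n, k)` whose terms depend on
`n + k` only through `Γ(β (n + k) + 1)`. Summing along antidiagonals `n + k = m`, the binomial
theorem turns the `m`-th group into `(u x - x) ^ m / Γ(β m + 1)` with `x = λ t ^ β`, which is
the `m`-th term of `E_β(-x (1 - u))`. The regrouping is legitimate because the same computation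
with absolute values gives `E_β(|u x| + |x|)`, and the Mittag-Leffler series converges everywhere
since `Γ(β m + 1) ≥ ⌊β m⌋!`.
-/

open Finset Filter Nat

namespace Real

theorem factorial_floor_le_Gamma_add_one {s : ℝ} (hs : 1 ≤ s) : (⌊s⌋₊ ! : ℝ) ≤ Gamma (s + 1) := by
  have hfloor : (1 : ℝ) ≤ ⌊s⌋₊ := by exact_mod_cast (Nat.one_le_floor_iff s).2 hs
  rw [← Gamma_nat_eq_factorial]
  refine Gamma_strictMonoOn_Ici.monotoneOn ?_ ?_ ?_
  · rw [Set.mem_Ici]; linarith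
  · rw [Set.mem_Ici]; linarith
  · linarith [Nat.floor_le (by linarith : 0 ≤ s)]

theorem rpow_div_Gamma_add_one_le {D s : ℝ} (hD : 1 ≤ D) (hs : 1 ≤ s) :
    D ^ s / Gamma (s + 1) ≤ D * exp D := by
  set j := ⌊s⌋₊
  have hpow : D ^ s ≤ D * D ^ j :=
    calc D ^ s ≤ D ^ ((j : ℝ) + 1) := rpow_le_rpow_of_exponent_le hD (Nat.lt_floor_add_one s).le
      _ = D * D ^ j := by rw [rpow_add_one (by positivity), rpow_natCast, mul_comm]
  calc D ^ s / Gamma (s + 1) ≤ D * D ^ j / j ! :=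
        div_le_div₀ (by positivity) hpow (by positivity) (factorial_floor_le_Gamma_add_one hs)
    _ = D * (D ^ j / j !) := mul_div_assoc _ _ _
    _ ≤ D * exp D := by gcongr; exact pow_div_factorial_le_exp D (by linarith) j

theorem summable_pow_div_Gamma_mul_add_one {β : ℝ} (hβ : 0 < β) (z : ℝ) :
    Summable fun m : ℕ => z ^ m / Gamma (β * m + 1) := by
  set c := |z| + 1
  have hc : 0 < c := by positivity
  set D := c ^ β⁻¹
  have hD : 1 ≤ D := one_le_rpow (by linarith [abs_nonneg z]) (inv_nonneg.2 hβ.le)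
  have hr : |z| / c < 1 := (div_lt_one hc).2 (lt_add_one _)
  refine ((summable_geometric_of_lt_one (by positivity) hr).mul_left
    (D * exp D)).of_norm_bounded_eventually_nat ?_
  filter_upwards [eventually_ge_atTop ⌈β⁻¹⌉₊] with m hm
  have hβm : 1 ≤ β * m := by
    rw [← inv_le_iff_one_le_mul₀' hβ]
    exact Nat.ceil_le.1 hm
  have hΓ : 0 < Gamma (β * m + 1) := Gamma_pos_of_pos (by linarith)
  have hDpow : D ^ (β * m) = c ^ m := by
    rw [← rpow_mul hc.le, inv_mul_cancel_left₀ hβ.ne', rpow_natCast]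
  calc ‖z ^ m / Gamma (β * m + 1)‖ = (|z| / c) ^ m * (D ^ (β * m) / Gamma (β * m + 1)) := by
        rw [hDpow, norm_div, norm_pow, Real.norm_eq_abs, Real.norm_of_nonneg hΓ.le, div_pow]
        field_simp
    _ ≤ (|z| / c) ^ m * (D * exp D) := by gcongr; exact rpow_div_Gamma_add_one_le hD hβm
    _ = D * exp D * (|z| / c) ^ m := mul_comm _ _

end Real

section Antidiagonal

variable {E : Type*} [NormedAddCommGroup E] [CompleteSpace E]

theorem summable_of_summable_sum_norm_antidiagonal {f : ℕ × ℕ → E}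
    (h : Summable fun m => ∑ p ∈ antidiagonal m, ‖f p‖) : Summable f := by
  refine Summable.of_norm ?_
  rw [← (HasAntidiagonal.sigmaAntidiagonalEquivProd (A := ℕ)).summable_iff]
  refine (summable_sigma_of_nonneg fun _ => norm_nonneg _).2 ⟨fun _ => .of_finite, ?_⟩
  convert h using 2 with m
  exact Finset.tsum_subtype _ fun p => ‖f p‖

theorem Summable.tsum_eq_tsum_sum_antidiagonal {f : ℕ × ℕ → E} (hf : Summable f) :
    ∑' p, f p = ∑' m, ∑ p ∈ antidiagonal m, f p := by
  set e := HasAntidiagonal.sigmaAntidiagonalEquivProd (A := ℕ)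
  rw [← e.tsum_eq]
  exact (e.summable_iff.2 hf).tsum_sigma.trans (tsum_congr fun m => Finset.tsum_subtype _ f)

end Antidiagonal

theorem sum_antidiagonal_choose_mul_pow_div_Gamma (β a b : ℝ) (m : ℕ) :
    ∑ p ∈ antidiagonal m,
        ((p.1 + p.2).choose p.1 : ℝ) * (a ^ p.1 * b ^ p.2) / Gamma (β * (p.1 + p.2 : ℕ) + 1)
      = (a + b) ^ m / Gamma (β * m + 1) := by
  rw [(Commute.all a b).add_pow', sum_div]
  refine sum_congr rfl fun p hp => ?_
  rw [mem_antidiagonal.1 hp, nsmul_eq_mul]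

theorem tsum_tsum_choose_mul_pow_div_Gamma {β : ℝ} (hβ : 0 < β) (a b : ℝ) :
    ∑' n : ℕ, ∑' k : ℕ,
        ((n + k).choose n : ℝ) * (a ^ n * b ^ k) / Gamma (β * (n + k : ℕ) + 1)
      = ∑' m : ℕ, (a + b) ^ m / Gamma (β * m + 1) := by
  set F : ℝ → ℝ → ℕ × ℕ → ℝ := fun x y p =>
    ((p.1 + p.2).choose p.1 : ℝ) * (x ^ p.1 * y ^ p.2) / Gamma (β * (p.1 + p.2 : ℕ) + 1)
  have hnorm : ∀ p, ‖F a b p‖ = F |a| |b| p := fun p => by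
    have hΓ : 0 < Gamma (β * (p.1 + p.2 : ℕ) + 1) := Gamma_pos_of_pos (by positivity)
    simp only [F, norm_div, norm_mul, norm_pow, Real.norm_eq_abs, Nat.abs_cast, abs_of_pos hΓ]
  have hF : Summable (F a b) := summable_of_summable_sum_norm_antidiagonal <| by
    simp_rw [hnorm, F, sum_antidiagonal_choose_mul_pow_div_Gamma]
    exact summable_pow_div_Gamma_mul_add_one hβ _
  rw [← hF.tsum_prod, hF.tsum_eq_tsum_sum_antidiagonal]
  simp_rw [F, sum_antidiagonal_choose_mul_pow_div_Gamma]

theorem pow_mul_fracPoissonPMF (β lam t u : ℝ) (n : ℕ) :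
    u ^ n * fracPoissonPMF β lam t n = ∑' k : ℕ, ((n + k).choose n : ℝ) *
      ((u * (lam * t ^ β)) ^ n * (-(lam * t ^ β)) ^ k) / Gamma (β * (n + k : ℕ) + 1) := by
  rw [fracPoissonPMF, ← mul_assoc, ← tsum_mul_left]
  refine tsum_congr fun k => ?_
  have hfac : ((n + k)! : ℝ) = (n + k).choose n * n ! * k ! := by
    rw [Nat.choose_symm_add]
    exact_mod_cast (Nat.add_choose_mul_factorial_mul_factorial n k).symm
  rw [hfac, Nat.cast_add, add_comm (k : ℝ)]
  field_simp
  ring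

theorem fpp_pgf_general (β lam t u : ℝ) (hβ : β ∈ Set.Ioc (0 : ℝ) 1) :
    ∑' n : ℕ, u ^ n * fracPoissonPMF β lam t n
      = mittagLeffler β (-(lam * t ^ β * (1 - u))) := by
  have hbase : u * (lam * t ^ β) + -(lam * t ^ β) = -(lam * t ^ β * (1 - u)) := by ring
  simp_rw [pow_mul_fracPoissonPMF, tsum_tsum_choose_mul_pow_div_Gamma hβ.1, hbase, mittagLeffler]

theorem fpp_pgf (β lam t u : ℝ) (hβ : β ∈ Set.Ioc (0 : ℝ) 1) (hlam : 0 < lam)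
    (ht : 0 < t) (hu : u ∈ Set.Icc (0 : ℝ) 1) :
    ∑' n : ℕ, u ^ n * fracPoissonPMF β lam t n
      = mittagLeffler β (-(lam * t ^ β * (1 - u))) :=
  fpp_pgf_general β lam t u hβ
end

section
/- For every β ∈ (0,1), the real Gamma function satisfies Γ(2β) < β · Γ(β)²; equivalently, 1/Γ(2β) − 1/(β Γ(β)²) > 0. -/
open MeasureTheory intervalIntegral Set

theorem gamma_two_beta_lt (β : ℝ) (hβ : β ∈ Set.Ioo (0 : ℝ) 1) :
    Real.Gamma (2 * β) < β * Real.Gamma β ^ 2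
      ∧ 0 < 1 / Real.Gamma (2 * β) - 1 / (β * Real.Gamma β ^ 2) := by
  obtain ⟨hβ0, hβ1⟩ := hβ
  set B : ℝ := ∫ x in (0:ℝ)..1, x ^ (β - 1) * (1 - x) ^ (β - 1) with hB
  -- complex beta integrand is integrable
  have hre : (0:ℝ) < Complex.re (β : ℂ) := by simpa using hβ0
  have hcint := Complex.betaIntegral_convergent (u := (β:ℂ)) (v := (β:ℂ)) hre hre
  -- real integrand agrees with re of complex integrand on [0,1]
  have hagree : ∀ x : ℝ, x ∈ Icc (0:ℝ) 1 →
      ((x ^ (β - 1) * (1 - x) ^ (β - 1) : ℝ) : ℂ)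
        = (x : ℂ) ^ ((β:ℂ) - 1) * (1 - (x:ℂ)) ^ ((β:ℂ) - 1) := by
    intro x hx
    rw [Complex.ofReal_mul, Complex.ofReal_cpow hx.1, Complex.ofReal_cpow (by linarith [hx.2])]
    push_cast
    ring_nf
  -- integrability of the real integrand
  have hrint : IntervalIntegrable (fun x : ℝ => x ^ (β - 1) * (1 - x) ^ (β - 1))
      volume 0 1 := by
    refine ⟨?_, ?_⟩
    · refine (hcint.1.re).congr ?_
      refine (ae_restrict_iff' measurableSet_Ioc).mpr ?_
      filter_upwards with x hx
      have := hagree x (Ioc_subset_Icc_self hx)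
      simp only [← this, Complex.ofReal_re, RCLike.re_to_complex]
    · simp [IntegrableOn, Ioc_eq_empty (by norm_num : ¬ (1:ℝ) < 0)]
  -- Gamma β ^ 2 = Gamma (2β) * B
  have key : Real.Gamma β ^ 2 = Real.Gamma (2 * β) * B := by
    have hc := Complex.Gamma_mul_Gamma_eq_betaIntegral hre hre
    have hbeta : Complex.betaIntegral (β:ℂ) (β:ℂ) = (B : ℂ) := by
      rw [Complex.betaIntegral, hB]
      rw [← intervalIntegral.integral_ofReal]
      refine intervalIntegral.integral_congr ?_
      intro x hx
      rw [uIcc_of_le (by norm_num : (0:ℝ) ≤ 1)] at hx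
      exact (hagree x hx).symm
    rw [hbeta] at hc
    have h2c : ((β:ℂ) + (β:ℂ)) = ((2 * β : ℝ) : ℂ) := by push_cast; ring
    rw [h2c, Complex.Gamma_ofReal, Complex.Gamma_ofReal] at hc
    have : ((Real.Gamma β * Real.Gamma β : ℝ) : ℂ) = ((Real.Gamma (2 * β) * B : ℝ) : ℂ) := by
      push_cast
      exact hc
    rw [sq]
    exact_mod_cast this
  -- 1/β < B
  have hint_rpow : IntervalIntegrable (fun x : ℝ => x ^ (β - 1)) volume 0 1 :=
    intervalIntegral.intervalIntegrable_rpow' (by linarith)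
  have hval : (∫ x in (0:ℝ)..1, x ^ (β - 1)) = 1 / β := by
    rw [integral_rpow (Or.inl (by linarith))]
    rw [sub_add_cancel]
    rw [Real.one_rpow, Real.zero_rpow hβ0.ne']
    ring
  have hpos : 0 < B - 1 / β := by
    rw [← hval, hB, ← intervalIntegral.integral_sub hrint hint_rpow]
    refine intervalIntegral_pos_of_pos_on (hrint.sub hint_rpow) ?_ one_pos
    intro x hx
    have hx0 : 0 < x := hx.1
    have hx1 : x < 1 := hx.2
    have h1 : (1:ℝ) < (1 - x) ^ (β - 1) := by
      rw [Real.one_lt_rpow_iff_of_pos (by linarith)]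
      right
      constructor <;> linarith
    have h2 : (0:ℝ) < x ^ (β - 1) := Real.rpow_pos_of_pos hx0 _
    have : x ^ (β - 1) * 1 < x ^ (β - 1) * (1 - x) ^ (β - 1) :=
      mul_lt_mul_of_pos_left h1 h2
    simp only [mul_one] at this
    linarith
  have hG2 : 0 < Real.Gamma (2 * β) := Real.Gamma_pos_of_pos (by linarith)
  have hmain : Real.Gamma (2 * β) < β * Real.Gamma β ^ 2 := by
    have : (1:ℝ) < β * B := by
      have hb : 1 / β < B := by linarith
      calc (1:ℝ) = β * (1 / β) := by field_simp
        _ < β * B := mul_lt_mul_of_pos_left hb hβ0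
    calc Real.Gamma (2 * β) = Real.Gamma (2 * β) * 1 := by ring
      _ < Real.Gamma (2 * β) * (β * B) := by
          exact mul_lt_mul_of_pos_left this hG2
      _ = β * Real.Gamma β ^ 2 := by rw [key]; ring
  refine ⟨hmain, ?_⟩
  have h2 : 1 / (β * Real.Gamma β ^ 2) < 1 / Real.Gamma (2 * β) :=
    one_div_lt_one_div_of_lt hG2 hmain
  linarith
end

section
/- Let β ∈ (0,1), λ > 0, and let X be a nonnegative random variable on a probability space with E[X^{2β}] < ∞. Set q = λ/Γ(1+β) and d = β q² B(β, 1+β). Then 2 d · E[X^{2β}] − q² · (E[X^β])² ≥ 0. (This is the overdispersion property: for the generalized fractional negative binomial process, whose variance minus mean equals 2 d E[X^{2β}] − (q E[X^β])² with X the value of the Mittag-Leffler Lévy subordinator at time t, the variance always dominates the mean.) -/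
/-!
By Jensen (or `Var[X^β] ≥ 0`), `(E[X^β])² ≤ E[X^{2β}]`, so it suffices that `q² ≤ 2d`. As
`βΓ(β) = Γ(1+β)`, this is `Γ(1+2β) ≤ 2 Γ(1+β)²`. Since `2` and `1+2β` lie between `1+β` and
`2+β` and have the same sum, log-convexity of `Γ` gives
`Γ(2) Γ(1+2β) ≤ Γ(1+β) Γ(2+β) = (1+β) Γ(1+β)²`.
-/

open Real MeasureTheory

/-- Beta function in terms of the real Gamma function. -/
noncomputable def betaFn (z₁ z₂ : ℝ) : ℝ :=
  Real.Gamma z₁ * Real.Gamma z₂ / Real.Gamma (z₁ + z₂)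

lemma ConvexOn.map_add_map_add_sub_le {s : Set ℝ} {f : ℝ → ℝ} (hf : ConvexOn ℝ s f)
    {a b c : ℝ} (ha : a ∈ s) (hb : b ∈ s) (hc : c ∈ Set.Icc a b) :
    f c + f (a + b - c) ≤ f a + f b := by
  obtain ⟨hac, hcb⟩ := hc
  rcases (hac.trans hcb).eq_or_lt with rfl | hab
  · obtain rfl : c = a := le_antisymm hcb hac
    simp
  set t := (b - c) / (b - a)
  have hba : 0 < b - a := sub_pos.2 hab
  have ht : t * (b - a) = b - c := div_mul_cancel₀ _ hba.ne'
  have ht₀ : 0 ≤ t := div_nonneg (sub_nonneg.2 hcb) hba.le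
  have ht₁ : 0 ≤ 1 - t := by rw [sub_nonneg]; exact div_le_one_of_le₀ (by linarith) hba.le
  have hc : t • a + (1 - t) • b = c := by simp only [smul_eq_mul]; linarith
  have hc' : (1 - t) • a + t • b = a + b - c := by simp only [smul_eq_mul]; linarith
  have h₁ := hf.2 ha hb ht₀ ht₁ (add_sub_cancel t 1)
  have h₂ := hf.2 ha hb ht₁ ht₀ (sub_add_cancel 1 t)
  rw [hc] at h₁
  rw [hc'] at h₂
  simp only [smul_eq_mul] at h₁ h₂
  linarith

namespace Real

lemma Gamma_one_add_two_mul_le {β : ℝ} (hβ₀ : 0 ≤ β) (hβ₁ : β ≤ 1) :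
    Gamma (1 + 2 * β) ≤ (1 + β) * Gamma (1 + β) ^ 2 := by
  have hlog := convexOn_log_Gamma.map_add_map_add_sub_le (a := 1 + β) (b := 2 + β) (c := 2)
    (Set.mem_Ioi.2 (by linarith)) (Set.mem_Ioi.2 (by linarith)) ⟨by linarith, by linarith⟩
  rw [show 1 + β + (2 + β) - 2 = 1 + 2 * β by ring] at hlog
  simp only [Function.comp_apply, Gamma_two, log_one, zero_add] at hlog
  have hGamma_two_add : Gamma (2 + β) = (1 + β) * Gamma (1 + β) := by
    rw [show 2 + β = 1 + β + 1 by ring, Gamma_add_one (by linarith)]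
  calc Gamma (1 + 2 * β) ≤ Gamma (1 + β) * Gamma (2 + β) := by
        rwa [← log_le_log_iff (Gamma_pos_of_pos (by linarith))
          (mul_pos (Gamma_pos_of_pos (by linarith)) (Gamma_pos_of_pos (by linarith))),
          log_mul (Gamma_pos_of_pos (by linarith)).ne' (Gamma_pos_of_pos (by linarith)).ne']
    _ = (1 + β) * Gamma (1 + β) ^ 2 := by rw [hGamma_two_add]; ring

end Real

lemma one_le_two_mul_mul_betaFn {β : ℝ} (hβ₀ : 0 < β) (hβ₁ : β ≤ 1) :
    1 ≤ 2 * β * betaFn β (1 + β) := by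
  have hΓ := Real.Gamma_pos_of_pos (show 0 < 1 + 2 * β by linarith)
  have hmul : β * Real.Gamma β = Real.Gamma (1 + β) := by
    rw [add_comm, Real.Gamma_add_one hβ₀.ne']
  have hbeta : 2 * β * betaFn β (1 + β) = 2 * Real.Gamma (1 + β) ^ 2 / Real.Gamma (1 + 2 * β) := by
    rw [betaFn, show β + (1 + β) = 1 + 2 * β by ring, ← hmul]
    ring
  rw [hbeta, one_le_div hΓ]
  nlinarith [Real.Gamma_one_add_two_mul_le hβ₀.le hβ₁, sq_nonneg (Real.Gamma (1 + β))]

section Moments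

variable {Ω : Type*} [MeasurableSpace Ω] {μ : Measure Ω} [IsProbabilityMeasure μ]

lemma sq_integral_le_integral_sq {Y : Ω → ℝ} (hY : MemLp Y 2 μ) :
    (∫ ω, Y ω ∂μ) ^ 2 ≤ ∫ ω, Y ω ^ 2 ∂μ := by
  have h := ProbabilityTheory.variance_nonneg Y μ
  rw [ProbabilityTheory.variance_eq_sub hY] at h
  simpa using h

lemma sq_integral_rpow_le_integral_rpow_two_mul {X : Ω → ℝ} (hX : ∀ ω, 0 ≤ X ω) {β : ℝ}
    (hint : Integrable (fun ω => X ω ^ (2 * β)) μ) :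
    (∫ ω, X ω ^ β ∂μ) ^ 2 ≤ ∫ ω, X ω ^ (2 * β) ∂μ := by
  have hsq : ∀ ω, X ω ^ (2 * β) = (X ω ^ β) ^ 2 := fun ω => by
    rw [mul_comm, rpow_mul (hX ω), rpow_two]
  have hsqrt : (fun ω => X ω ^ β) = fun ω => (X ω ^ (2 * β)) ^ (1 / 2 : ℝ) := by
    ext ω
    rw [← rpow_mul (hX ω)]
    ring_nf
  have hmeas : AEStronglyMeasurable (fun ω => X ω ^ β) μ := by
    rw [hsqrt]
    exact (continuous_rpow_const (by norm_num)).comp_aestronglyMeasurable hint.1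
  simp only [hsq] at hint ⊢
  exact sq_integral_le_integral_sq ((memLp_two_iff_integrable_sq hmeas).2 hint)

end Moments

theorem overdispersion_general {Ω : Type*} [MeasurableSpace Ω] (μ : Measure Ω)
    [IsProbabilityMeasure μ] (X : Ω → ℝ)
    (hXnn : ∀ ω, 0 ≤ X ω) (β : ℝ) (hβ : β ∈ Set.Ioo (0 : ℝ) 1)
    (hint : Integrable (fun ω => X ω ^ (2 * β)) μ)
    (q d : ℝ)
    (hd : d = β * q ^ 2 * betaFn β (1 + β)) :
    0 ≤ 2 * d * (∫ ω, X ω ^ (2 * β) ∂μ) - q ^ 2 * (∫ ω, X ω ^ β ∂μ) ^ 2 := by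
  have hq2d : q ^ 2 ≤ 2 * d := by
    rw [hd, show 2 * (β * q ^ 2 * betaFn β (1 + β)) = q ^ 2 * (2 * β * betaFn β (1 + β)) by ring]
    exact le_mul_of_one_le_right (sq_nonneg q) (one_le_two_mul_mul_betaFn hβ.1 hβ.2.le)
  have hjensen := sq_integral_rpow_le_integral_rpow_two_mul hXnn hint
  have hA : 0 ≤ ∫ ω, X ω ^ (2 * β) ∂μ := integral_nonneg fun ω => rpow_nonneg (hXnn ω) _
  linarith [mul_le_mul_of_nonneg_left hjensen (sq_nonneg q), mul_le_mul_of_nonneg_right hq2d hA]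

theorem overdispersion {Ω : Type*} [MeasurableSpace Ω] (μ : Measure Ω)
    [IsProbabilityMeasure μ] (X : Ω → ℝ) (hX : Measurable X)
    (hXnn : ∀ ω, 0 ≤ X ω) (β lam : ℝ) (hβ : β ∈ Set.Ioo (0 : ℝ) 1)
    (hlam : 0 < lam)
    (hint : Integrable (fun ω => X ω ^ (2 * β)) μ)
    (q d : ℝ) (hq : q = lam / Real.Gamma (1 + β))
    (hd : d = β * q ^ 2 * betaFn β (1 + β)) :
    0 ≤ 2 * d * (∫ ω, X ω ^ (2 * β) ∂μ) - q ^ 2 * (∫ ω, X ω ^ β ∂μ) ^ 2 :=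
  overdispersion_general μ X hXnn β hβ hint q d hd
end

section
/- Let α' ∈ (0,1), λ > 0, t > 0 and u ∈ [0,1]. Then the probability generating function of the space fractional Poisson process satisfies ∑_{n=0}^∞ u^n p_{α'}(n|t,λ) = exp(−t λ^{α'} (1−u)^{α'}). -/
/-!
Since `Γ(z + 1) / Γ(z + 1 - n) = n! · binom(z, n)`, the term `uⁿ p(n)` equals
`∑ₖ (-λ^α' t)ᵏ / k! · binom(kα', n) (-u)ⁿ`. This double series converges absolutely: for an
integer `K ≥ z ≥ 0` the moduli `bₙ = |binom(z, n)|` are at most `Kⁿ / n!` for `n ≤ K`, while for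
`n ≥ K` they satisfy `(n + 1) bₙ₊₁ = (n - z) bₙ`, which telescopes to `z ∑_{n ≥ K} bₙ ≤ K b_K`;
hence `z ∑ bₙ ≤ (z + K) e^K`. Summing over `n` first gives the binomial series
`∑ₙ binom(kα', n) (-u)ⁿ = (1 - u)^{kα'}` (at `u = 1` by Abel's theorem), and the remaining sum
over `k` is the exponential series.
-/

open Real

/-- pmf of the space fractional Poisson process.  The ratio
`Γ(kα'+1)/Γ(kα'+1-n)` is interpreted as `0` when `kα'+1-n` is a nonpositive
integer, which is automatic since Mathlib's `Real.Gamma` vanishes at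
nonpositive integers and division by zero yields zero. -/
noncomputable def sfppPMF (α' lam t : ℝ) (n : ℕ) : ℝ :=
  (-1 : ℝ) ^ n / n.factorial *
    ∑' k : ℕ, (-(lam ^ α' * t)) ^ k / k.factorial *
      (Real.Gamma ((k : ℝ) * α' + 1) / Real.Gamma ((k : ℝ) * α' + 1 - n))

open Polynomial Finset Filter Topology Nat

theorem Ring.choose_succ_mul {K : Type*} [Field K] [CharZero K] (z : K) (n : ℕ) :
    Ring.choose z (n + 1) * (n + 1) = Ring.choose z n * (z - n) := by
  simp only [Ring.choose_eq_smul, descPochhammer_succ_right, smeval_mul, smeval_sub, smeval_X,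
    smeval_natCast, Nat.factorial_succ, smul_eq_mul, pow_one, pow_zero, nsmul_eq_mul, mul_one]
  have : (n.factorial : K) ≠ 0 := Nat.cast_ne_zero.2 n.factorial_ne_zero
  have : (n : K) + 1 ≠ 0 := Nat.cast_add_one_ne_zero n
  push_cast
  field_simp

theorem Real.Gamma_add_one_div_Gamma_sub_natCast {z : ℝ} (hz : Real.Gamma (z + 1) ≠ 0) (n : ℕ) :
    Real.Gamma (z + 1) / Real.Gamma (z + 1 - n) = n ! * Ring.choose z n := by
  induction n with
  | zero => simp [div_self hz]
  | succ n ih =>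
    have hsucc : z + 1 - (n + 1 : ℕ) = z - n := by push_cast; ring
    rw [hsucc, factorial_succ, Nat.cast_mul, mul_comm ((n + 1 : ℕ) : ℝ), mul_assoc,
      Nat.cast_succ, mul_comm _ (Ring.choose z _), Ring.choose_succ_mul, ← mul_assoc, ← ih]
    rcases eq_or_ne (z - n) 0 with h | h
    · simp [h]
    · rw [show z + 1 - n = (z - n) + 1 by ring, Real.Gamma_add_one h, div_mul_eq_mul_div,
        mul_comm (z - n), mul_div_mul_right _ _ h]

theorem Real.hasSum_choose_mul_pow {a x : ℝ} (hx : |x| < 1) :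
    HasSum (fun n ↦ Ring.choose a n * x ^ n) ((1 + x) ^ a) := by
  have := (Real.one_add_rpow_hasFPowerSeriesOnBall_zero (a := a)).hasSum (y := x)
    (by simpa [Metric.mem_eball, edist_dist] using hx)
  simpa [binomialSeries, FormalMultilinearSeries.ofScalars, mul_comm] using this

section AbsChoose

variable {z : ℝ} {K : ℕ}

theorem abs_choose_succ_mul (n : ℕ) :
    |Ring.choose z (n + 1)| * (n + 1) = |Ring.choose z n| * |z - n| := by
  simpa [abs_mul, abs_of_nonneg (by positivity : (0 : ℝ) ≤ n + 1)] using
    congrArg abs (Ring.choose_succ_mul z n)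

theorem abs_choose_le_pow_div_factorial (hz : 0 ≤ z) (hzK : z ≤ K) {n : ℕ} (hn : n ≤ K) :
    |Ring.choose z n| ≤ K ^ n / n ! := by
  induction n with
  | zero => simp
  | succ n ih =>
    have hnK : (n : ℝ) + 1 ≤ K := by exact_mod_cast hn
    have hzn : |z - n| ≤ K := abs_sub_le_iff.2 ⟨by linarith [n.cast_nonneg (α := ℝ)], by linarith⟩
    have hpos : (0 : ℝ) < n + 1 := by positivity
    calc |Ring.choose z (n + 1)| = |Ring.choose z n| * |z - n| / (n + 1) := by
          rw [eq_div_iff hpos.ne', abs_choose_succ_mul]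
      _ ≤ K ^ n / n ! * K / (n + 1) := by gcongr; exact ih (by omega)
      _ = K ^ (n + 1) / (n + 1)! := by
          rw [factorial_succ]; push_cast; field_simp; ring

theorem abs_choose_le_exp (hz : 0 ≤ z) (hzK : z ≤ K) {n : ℕ} (hn : n ≤ K) :
    |Ring.choose z n| ≤ Real.exp K :=
  (abs_choose_le_pow_div_factorial hz hzK hn).trans
    (Real.pow_div_factorial_le_exp _ K.cast_nonneg n)

theorem mul_sum_Ico_abs_choose_add (hzK : z ≤ K) {N : ℕ} (hN : K ≤ N) :
    z * ∑ n ∈ Ico K N, |Ring.choose z n| + N * |Ring.choose z N| = K * |Ring.choose z K| := by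
  induction N, hN using Nat.le_induction with
  | base => simp
  | succ N hN ih =>
    have hzN : z ≤ N := hzK.trans (by exact_mod_cast hN)
    rw [sum_Ico_succ_top hN, Nat.cast_succ, mul_comm _ |Ring.choose z (N + 1)|,
      abs_choose_succ_mul, abs_of_nonpos (by linarith : z - N ≤ 0), ← ih]
    ring

theorem mul_sum_range_abs_choose_le (hz : 0 ≤ z) (hzK : z ≤ K) (N : ℕ) :
    z * ∑ n ∈ range N, |Ring.choose z n| ≤ (z + K) * Real.exp K := by
  have hhead : ∑ n ∈ range K, |Ring.choose z n| ≤ Real.exp K :=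
    (sum_le_sum fun n hn ↦ abs_choose_le_pow_div_factorial hz hzK (mem_range.1 hn).le).trans
      (Real.sum_le_exp_of_nonneg K.cast_nonneg K)
  have htail : z * ∑ n ∈ Ico K (max N K), |Ring.choose z n| ≤ K * Real.exp K := by
    have := mul_sum_Ico_abs_choose_add hzK (le_max_right N K)
    have := abs_choose_le_exp hz hzK le_rfl
    nlinarith [abs_nonneg (Ring.choose z (max N K)), (max N K).cast_nonneg (α := ℝ),
      K.cast_nonneg (α := ℝ)]
  calc z * ∑ n ∈ range N, |Ring.choose z n|
      ≤ z * ∑ n ∈ range (max N K), |Ring.choose z n| := by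
        gcongr
        exact le_max_left N K
    _ = z * ∑ n ∈ range K, |Ring.choose z n| + z * ∑ n ∈ Ico K (max N K), |Ring.choose z n| := by
        rw [← sum_range_add_sum_Ico _ (le_max_right N K), mul_add]
    _ ≤ (z + K) * Real.exp K := by nlinarith

theorem summable_abs_choose (hz : 0 ≤ z) : Summable fun n ↦ |Ring.choose z n| := by
  rcases hz.eq_or_lt with rfl | hz
  · refine summable_of_ne_finset_zero (s := {0}) fun n hn ↦ ?_
    simp [Ring.choose_zero_pos ℝ (Nat.pos_of_ne_zero (by simpa using hn))]
  · refine summable_of_sum_range_le (c := (z + ⌈z⌉₊) * Real.exp ⌈z⌉₊ / z) (fun _ ↦ abs_nonneg _)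
      fun N ↦ ?_
    rw [le_div_iff₀' hz]
    exact mul_sum_range_abs_choose_le hz.le (Nat.le_ceil z) N

theorem mul_tsum_abs_choose_le (hz : 0 ≤ z) (hzK : z ≤ K) :
    z * ∑' n, |Ring.choose z n| ≤ (z + K) * Real.exp K := by
  rw [← tsum_mul_left]
  refine Real.tsum_le_of_sum_range_le (fun _ ↦ by positivity) fun N ↦ ?_
  rw [← mul_sum]
  exact mul_sum_range_abs_choose_le hz hzK N

end AbsChoose

theorem Real.hasSum_choose_mul_pow_of_abs_le {a x : ℝ} (ha : 0 ≤ a) (hx : |x| ≤ 1) :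
    HasSum (fun n ↦ Ring.choose a n * x ^ n) ((1 + x) ^ a) := by
  have hsum : Summable fun n ↦ Ring.choose a n * x ^ n :=
    (summable_abs_choose ha).of_norm_bounded fun n ↦ by
      simpa [abs_mul] using mul_le_of_le_one_right (abs_nonneg _) (pow_le_one₀ (abs_nonneg x) hx)
  have hseries : ∀ᶠ y in 𝓝[<] (1 : ℝ),
      ∑' n, Ring.choose a n * x ^ n * y ^ n = (1 + x * y) ^ a := by
    filter_upwards [Ioo_mem_nhdsLT (show (0 : ℝ) < 1 by norm_num)] with y hy
    have hxy : |x * y| < 1 := by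
      rw [abs_mul, abs_of_pos hy.1]
      calc |x| * y ≤ 1 * y := by gcongr; exact hy.1.le
        _ < 1 := by linarith [hy.2]
    simpa [mul_pow, mul_assoc] using (Real.hasSum_choose_mul_pow (a := a) hxy).tsum_eq
  have habel := Real.tendsto_tsum_powerSeries_nhdsWithin_lt hsum.hasSum.tendsto_sum_nat
  have hcont : Tendsto (fun y ↦ (1 + x * y) ^ a) (𝓝[<] (1 : ℝ)) (𝓝 ((1 + x) ^ a)) := by
    have hc : Continuous fun y : ℝ ↦ (1 + x * y) ^ a :=
      (Real.continuous_rpow_const ha).comp (by fun_prop)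
    simpa using hc.tendsto 1 |>.mono_left nhdsWithin_le_nhds
  rw [← tendsto_nhds_unique (habel.congr' hseries) hcont]
  exact hsum.hasSum

theorem tsum_abs_choose_natCast_mul_le {α : ℝ} (hα : 0 < α) {k : ℕ} (hk : 1 ≤ k) :
    ∑' n, |Ring.choose (k * α) n| ≤ (1 + ⌈α⌉₊ / α) * Real.exp ⌈α⌉₊ ^ k := by
  have hkα : 0 < (k : ℝ) * α := by positivity
  -- `K = k ⌈α⌉₊` turns the bound `(1 + K / z) e^K` into one geometric in `k`.
  have hK : (k : ℝ) * α ≤ (k * ⌈α⌉₊ : ℕ) := by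
    push_cast; exact mul_le_mul_of_nonneg_left (Nat.le_ceil α) k.cast_nonneg
  calc ∑' n, |Ring.choose (k * α) n|
      = k * α * (∑' n, |Ring.choose (k * α) n|) / (k * α) :=
        (mul_div_cancel_left₀ _ hkα.ne').symm
    _ ≤ (k * α + (k * ⌈α⌉₊ : ℕ)) * Real.exp (k * ⌈α⌉₊ : ℕ) / (k * α) :=
      div_le_div_of_nonneg_right (mul_tsum_abs_choose_le hkα.le hK) hkα.le
    _ = (1 + ⌈α⌉₊ / α) * Real.exp ⌈α⌉₊ ^ k := by
      rw [← Real.exp_nat_mul]; push_cast; field_simp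

theorem summable_pow_div_factorial_mul_choose_mul_pow {α : ℝ} (hα : 0 < α) (c : ℝ) {x : ℝ}
    (hx : |x| ≤ 1) :
    Summable fun p : ℕ × ℕ ↦ c ^ p.1 / p.1 ! * (Ring.choose (p.1 * α) p.2 * x ^ p.2) := by
  set g : ℕ × ℕ → ℝ := fun p ↦ |c| ^ p.1 / p.1 ! * |Ring.choose (p.1 * α) p.2|
  set m := ⌈α⌉₊
  have hk : ∀ k : ℕ, 0 ≤ (k : ℝ) * α := fun k ↦ by positivity
  have hrow : ∀ k : ℕ, 1 ≤ k →
      ∑' n, g (k, n) ≤ (1 + m / α) * ((|c| * Real.exp m) ^ k / k !) := fun k hk1 ↦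
    calc ∑' n, g (k, n) = |c| ^ k / k ! * ∑' n, |Ring.choose (k * α) n| := by
          simp only [g]; exact tsum_mul_left
      _ ≤ |c| ^ k / k ! * ((1 + m / α) * Real.exp m ^ k) := by
          gcongr; exact tsum_abs_choose_natCast_mul_le hα hk1
      _ = (1 + m / α) * ((|c| * Real.exp m) ^ k / k !) := by ring
  have hg : Summable g := by
    refine (summable_prod_of_nonneg fun p ↦ by positivity).2 ⟨fun k ↦ ?_, ?_⟩
    · exact (summable_abs_choose (hk k)).mul_left (|c| ^ k / k !)
    · refine .of_norm_bounded_eventually_nat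
        ((Real.summable_pow_div_factorial (|c| * Real.exp m)).mul_left (1 + m / α)) ?_
      filter_upwards [eventually_ge_atTop 1] with k hk1
      rw [Real.norm_of_nonneg (tsum_nonneg fun n ↦ by positivity)]
      exact hrow k hk1
  refine hg.of_norm_bounded fun p ↦ ?_
  simp only [g, norm_mul, norm_div, norm_pow, Real.norm_eq_abs, Nat.abs_cast]
  gcongr
  exact mul_le_of_le_one_right (abs_nonneg _) (pow_le_one₀ (abs_nonneg x) hx)

theorem sfpp_pgf_general (α' lam t u : ℝ) (hα : α' ∈ Set.Ioo (0 : ℝ) 1)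
    (hu : u ∈ Set.Icc (0 : ℝ) 1) :
    ∑' n : ℕ, u ^ n * sfppPMF α' lam t n
      = Real.exp (-(t * lam ^ α' * (1 - u) ^ α')) := by
  obtain ⟨hα0, -⟩ := hα
  obtain ⟨hu0, hu1⟩ := hu
  have hx : |-u| ≤ 1 := by rw [abs_neg, abs_of_nonneg hu0]; exact hu1
  set F : ℕ → ℕ → ℝ := fun k n ↦ (-(lam ^ α' * t)) ^ k / k ! * (Ring.choose (k * α') n * (-u) ^ n)
  have hk : ∀ k : ℕ, 0 ≤ (k : ℝ) * α' := fun k ↦ by positivity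
  have hrow : ∀ n : ℕ, u ^ n * sfppPMF α' lam t n = ∑' k, F k n := by
    intro n
    have hΓ : ∀ k : ℕ, Real.Gamma (k * α' + 1) ≠ 0 := fun k ↦
      (Real.Gamma_pos_of_pos (by linarith [hk k])).ne'
    simp only [sfppPMF, Real.Gamma_add_one_div_Gamma_sub_natCast (hΓ _), ← tsum_mul_left]
    refine tsum_congr fun k ↦ ?_
    have : (n ! : ℝ) ≠ 0 := Nat.cast_ne_zero.2 n.factorial_ne_zero
    simp only [F, neg_pow u]
    field_simp
  have hcol : ∀ k : ℕ, ∑' n, F k n = (-(t * lam ^ α' * (1 - u) ^ α')) ^ k / k ! := by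
    intro k
    rw [tsum_mul_left, (Real.hasSum_choose_mul_pow_of_abs_le (hk k) hx).tsum_eq, ← sub_eq_add_neg,
      mul_comm (k : ℝ), Real.rpow_mul_natCast (by linarith), div_mul_eq_mul_div, ← mul_pow]
    ring
  have hF := summable_pow_div_factorial_mul_choose_mul_pow hα0 (-(lam ^ α' * t)) hx
  rw [tsum_congr hrow, hF.tsum_comm, tsum_congr hcol, Real.exp_eq_exp_ℝ, NormedSpace.exp_eq_tsum_div]

theorem sfpp_pgf (α' lam t u : ℝ) (hα : α' ∈ Set.Ioo (0 : ℝ) 1) (hlam : 0 < lam)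
    (ht : 0 < t) (hu : u ∈ Set.Icc (0 : ℝ) 1) :
    ∑' n : ℕ, u ^ n * sfppPMF α' lam t n
      = Real.exp (-(t * lam ^ α' * (1 - u) ^ α')) :=
  sfpp_pgf_general α' lam t u hα hu
end

section
/- Let β ∈ (0,1], λ > 0, μ > 0, ρ > 0, t > 0, n ∈ ℤ₊, and assume λ < μ^β. Then the probability mass function of the fractional negative binomial process, obtained by integrating the fractional Poisson pmf against the gamma density, satisfies ∫₀^∞ p_β(n|y,λ) f_G(y,t) dy = (λ^n/n!) · ∑_{k=0}^∞ ((n+k)!/(μ^{β(n+k)} k!)) · Γ((n+k)β + ρt) (−λ)^k / (Γ(ρt) Γ(β(k+n)+1)). -/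
open Real

/-- density of the gamma subordinator `Γ(t) ∼ G(μ, ρt)`. -/
noncomputable def gammaDensity (μ ρ t x : ℝ) : ℝ :=
  μ ^ (ρ * t) / Real.Gamma (ρ * t) * x ^ (ρ * t - 1) * Real.exp (-(μ * x))

/-!
Expanding `p_β(n | y, λ)` in powers of `y ^ β` and multiplying by the gamma density turns the
integrand into `∑ₖ aₖ y ^ (β (n + k) + ρt - 1) e ^ (-μy)`, and each term integrates to
`aₖ Γ(β (n + k) + ρt) / μ ^ (β (n + k) + ρt)`. Integrating term by term is legitimate because the
series of absolute values of these integrals is, up to a constant factor,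
`∑ₖ (n+k)!/k! · Γ(β(n+k) + ρt)/Γ(β(n+k) + 1) · (λ / μ^β)^k`: since
`Γ(x + c) ≤ Γ(x + 1) (x + 1 + ⌈c⌉)^⌈c⌉` for `x ≥ 2`, its terms are polynomial in `k` times the
geometric factor `(λ / μ^β)^k`, and `λ < μ^β`.
-/

open MeasureTheory Set Filter

namespace Real

lemma Gamma_add_nat_le {y : ℝ} (hy : 0 < y) (m : ℕ) : Gamma (y + m) ≤ Gamma y * (y + m) ^ m := by
  induction m with
  | zero => simp
  | succ m ih =>
    have hym : 0 < y + m := by positivity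
    have hΓ : 0 ≤ Gamma y := (Gamma_pos_of_pos hy).le
    rw [Nat.cast_succ, ← add_assoc, Gamma_add_one hym.ne', pow_succ]
    calc (y + m) * Gamma (y + m) ≤ (y + m) * (Gamma y * (y + m) ^ m) := by gcongr
      _ ≤ (y + m + 1) * (Gamma y * (y + m + 1) ^ m) := by gcongr ?_ * (_ * ?_ ^ _) <;> linarith
      _ = Gamma y * ((y + m + 1) ^ m * (y + m + 1)) := by ring

lemma Gamma_add_le_Gamma_add_one_mul_pow {x c : ℝ} (hx : 2 ≤ x) (hc : 0 ≤ c) :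
    Gamma (x + c) ≤ Gamma (x + 1) * (x + 1 + ⌈c⌉₊) ^ ⌈c⌉₊ := by
  have hcm : c ≤ ⌈c⌉₊ := Nat.le_ceil c
  calc Gamma (x + c) ≤ Gamma (x + 1 + ⌈c⌉₊) :=
        Gamma_strictMonoOn_Ici.monotoneOn (by simp only [mem_Ici]; linarith)
          (by simp only [mem_Ici]; linarith) (by linarith)
    _ ≤ _ := Gamma_add_nat_le (by linarith) _

end Real

lemma Nat.cast_factorial_add_div_factorial_le (n k : ℕ) :
    ((n + k).factorial / k.factorial : ℝ) ≤ ((n + k : ℕ) : ℝ) ^ n := by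
  have h := Nat.factorial_mul_descFactorial (Nat.le_add_right n k)
  rw [Nat.add_sub_cancel_left] at h
  rw [div_le_iff₀ (by positivity), ← h]
  push_cast
  rw [mul_comm]
  gcongr
  exact_mod_cast Nat.descFactorial_le_pow _ _

theorem summable_factorial_div_mul_Gamma_div_mul_geometric {β c r : ℝ} (hβ : 0 < β)
    (hc : 0 ≤ c) (hr₀ : 0 ≤ r) (hr₁ : r < 1) (n : ℕ) :
    Summable fun k : ℕ => ((n + k).factorial / k.factorial : ℝ) *
      (Gamma (β * ((n : ℝ) + k) + c) / Gamma (β * ((n : ℝ) + k) + 1)) * r ^ k := by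
  set m := ⌈c⌉₊
  have hgeom : Summable fun k : ℕ =>
      (β + 1 + m) ^ m * (n + 1 : ℝ) ^ (n + m) * ((k : ℝ) ^ (n + m) * r ^ k) := by
    have hr : ‖r‖ < 1 := by rwa [norm_of_nonneg hr₀]
    exact (summable_pow_mul_geometric_of_norm_lt_one (n + m) hr).mul_left _
  refine hgeom.of_norm_bounded_eventually_nat ?_
  have hlarge : ∀ᶠ k : ℕ in atTop, 2 ≤ β * k :=
    (tendsto_natCast_atTop_atTop.const_mul_atTop hβ).eventually_ge_atTop 2
  filter_upwards [hlarge, eventually_ge_atTop 1] with k hk hk₁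
  set x := β * ((n : ℝ) + k)
  set L := (n + 1 : ℝ) * k
  have hk₁' : (1 : ℝ) ≤ k := by exact_mod_cast hk₁
  have hx : 2 ≤ x := by nlinarith [Nat.cast_nonneg (α := ℝ) n]
  have hnk : ((n + k : ℕ) : ℝ) ≤ L := by push_cast; nlinarith [Nat.cast_nonneg (α := ℝ) n]
  have hL : 1 ≤ L := by nlinarith [Nat.cast_nonneg (α := ℝ) n]
  have hxm : x + 1 + m ≤ (β + 1 + m) * L := by
    push_cast at hnk
    nlinarith [mul_le_mul_of_nonneg_left hnk hβ.le, Nat.cast_nonneg (α := ℝ) m]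
  have hΓ₁ : 0 < Gamma (x + 1) := Gamma_pos_of_pos (by linarith)
  have hratio : Gamma (x + c) / Gamma (x + 1) ≤ ((β + 1 + m) * L) ^ m := by
    rw [div_le_iff₀ hΓ₁, mul_comm]
    exact (Gamma_add_le_Gamma_add_one_mul_pow hx hc).trans (by gcongr)
  have hΓc : 0 < Gamma (x + c) := Gamma_pos_of_pos (by linarith)
  rw [norm_of_nonneg (by positivity)]
  calc ((n + k).factorial / k.factorial : ℝ) * (Gamma (x + c) / Gamma (x + 1)) * r ^ k
      ≤ L ^ n * ((β + 1 + m) * L) ^ m * r ^ k := by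
        gcongr
        exact (Nat.cast_factorial_add_div_factorial_le n k).trans (by gcongr)
    _ = (β + 1 + m) ^ m * (n + 1 : ℝ) ^ (n + m) * ((k : ℝ) ^ (n + m) * r ^ k) := by
        simp only [L, mul_pow, pow_add]; ring

theorem integral_Ioi_tsum_mul_rpow_mul_exp_neg_mul {a s : ℕ → ℝ} {μ : ℝ} (hs : ∀ k, 0 < s k)
    (hμ : 0 < μ) (hsum : Summable fun k => |a k| * (Gamma (s k) / μ ^ s k)) :
    ∫ y in Ioi 0, ∑' k, a k * (y ^ (s k - 1) * exp (-(μ * y))) =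
      ∑' k, a k * (Gamma (s k) / μ ^ s k) := by
  have hval (k : ℕ) : ∫ y in Ioi 0, y ^ (s k - 1) * exp (-(μ * y)) = Gamma (s k) / μ ^ s k := by
    rw [integral_rpow_mul_exp_neg_mul_Ioi (hs k) hμ, one_div, inv_rpow hμ.le, inv_mul_eq_div]
  have hint (k : ℕ) : IntegrableOn (fun y => y ^ (s k - 1) * exp (-(μ * y))) (Ioi 0) :=
    -- a non-integrable function would have Bochner integral `0`
    Integrable.of_integral_ne_zero <| by rw [hval]; have := Gamma_pos_of_pos (hs k); positivity
  rw [← integral_tsum_of_summable_integral_norm fun k => (hint k).const_mul (a k)]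
  · simp only [integral_const_mul, hval]
  · refine hsum.congr fun k => ?_
    rw [← hval, ← integral_const_mul]
    refine setIntegral_congr_fun measurableSet_Ioi fun y (hy : 0 < y) => ?_
    rw [norm_mul, norm_eq_abs, norm_of_nonneg (by positivity)]

noncomputable def fracPoissonCoeff (β lam : ℝ) (n k : ℕ) : ℝ :=
  lam ^ n / n.factorial *
    ((n + k).factorial / k.factorial * (-lam) ^ k / Gamma (β * ((k : ℝ) + n) + 1))

lemma fracPoissonPMF_eq_tsum (β lam : ℝ) {t : ℝ} (ht : 0 ≤ t) (n : ℕ) :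
    fracPoissonPMF β lam t n = ∑' k, fracPoissonCoeff β lam n k * t ^ (β * ((n : ℝ) + k)) := by
  rw [fracPoissonPMF, ← tsum_mul_left]
  refine tsum_congr fun k => ?_
  have hpow : t ^ (β * ((n : ℝ) + k)) = (t ^ β) ^ n * (t ^ β) ^ k := by
    rw [← pow_add, ← rpow_natCast, ← rpow_mul ht]
    push_cast
    rfl
  rw [fracPoissonCoeff, hpow, neg_mul_eq_neg_mul, mul_pow, mul_pow]
  ring

lemma fracPoissonPMF_mul_gammaDensity (β lam μ ρ t : ℝ) {y : ℝ} (hy : 0 < y) (n : ℕ) :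
    fracPoissonPMF β lam y n * gammaDensity μ ρ t y =
      ∑' k, fracPoissonCoeff β lam n k * (μ ^ (ρ * t) / Gamma (ρ * t)) *
        (y ^ (β * ((n : ℝ) + k) + ρ * t - 1) * exp (-(μ * y))) := by
  rw [fracPoissonPMF_eq_tsum β lam hy.le, gammaDensity, ← tsum_mul_right]
  refine tsum_congr fun k => ?_
  rw [add_sub_assoc, rpow_add hy]
  ring

lemma summable_abs_fracPoissonCoeff_mul_Gamma_div {β lam μ c : ℝ} (hβ : 0 < β) (hlam : 0 ≤ lam)
    (hμ : 0 < μ) (hc : 0 ≤ c) (hlamμ : lam < μ ^ β) (n : ℕ) :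
    Summable fun k => |fracPoissonCoeff β lam n k| *
      (Gamma (β * ((n : ℝ) + k) + c) / μ ^ (β * ((n : ℝ) + k) + c)) := by
  have hr : lam / μ ^ β < 1 := (div_lt_one (by positivity)).2 hlamμ
  refine ((summable_factorial_div_mul_Gamma_div_mul_geometric hβ hc (by positivity) hr
    n).mul_left (lam ^ n / n.factorial / μ ^ (β * n) / μ ^ c)).congr fun k => ?_
  have hμpow : μ ^ (β * ((n : ℝ) + k)) = μ ^ (β * n) * (μ ^ β) ^ k := by
    rw [mul_add, rpow_add hμ, ← rpow_natCast, ← rpow_mul hμ.le]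
  simp only [fracPoissonCoeff, abs_mul, abs_div, abs_pow, abs_neg, abs_of_nonneg hlam, Nat.abs_cast,
    abs_of_pos (Gamma_pos_of_pos (by positivity : 0 < β * ((k : ℝ) + n) + 1))]
  rw [rpow_add hμ, hμpow, add_comm (k : ℝ) n, div_pow]
  field_simp

theorem fnbp_pmf (β lam μ ρ t : ℝ) (n : ℕ) (hβ : β ∈ Set.Ioc (0 : ℝ) 1)
    (hlam : 0 < lam) (hμ : 0 < μ) (hρ : 0 < ρ) (ht : 0 < t)
    (hlamμ : lam < μ ^ β) :
    ∫ y in Set.Ioi (0 : ℝ), fracPoissonPMF β lam y n * gammaDensity μ ρ t y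
      = lam ^ n / n.factorial *
          ∑' k : ℕ, ((n + k).factorial : ℝ) / (μ ^ (β * ((n : ℝ) + k)) * k.factorial) *
            (Real.Gamma (((n : ℝ) + k) * β + ρ * t) * (-lam) ^ k /
              (Real.Gamma (ρ * t) * Real.Gamma (β * ((k : ℝ) + n) + 1))) := by
  obtain ⟨hβ, -⟩ := hβ
  have hc : 0 < ρ * t := mul_pos hρ ht
  have hΓc : 0 < Gamma (ρ * t) := Gamma_pos_of_pos hc
  rw [setIntegral_congr_fun measurableSet_Ioi fun y hy =>
      fracPoissonPMF_mul_gammaDensity β lam μ ρ t hy n,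
    integral_Ioi_tsum_mul_rpow_mul_exp_neg_mul (fun k => by positivity) hμ ?summable,
    ← tsum_mul_left]
  case summable =>
    have hdensity : 0 < μ ^ (ρ * t) / Gamma (ρ * t) := by positivity
    refine ((summable_abs_fracPoissonCoeff_mul_Gamma_div hβ hlam.le hμ hc.le hlamμ n).mul_left
      (μ ^ (ρ * t) / Gamma (ρ * t))).congr fun k => ?_
    rw [abs_mul, abs_of_pos hdensity]
    ring
  refine tsum_congr fun k => ?_
  rw [fracPoissonCoeff, rpow_add hμ, mul_comm ((n : ℝ) + k) β]
  field_simp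
end
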